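/- arXiv:math/0406510 — 7 statements merged into one kernel-verified Lean document; each statement's English description precedes it below -/
import Mathlib

section
/- The flat torus ℝ²/ℤ² has the finite blocking property with at most 4 blocking points: for every pair of points O, A ∈ ℝ² there exists a finite set B ⊆ ℝ² with at most 4 elements such that no element of B is congruent to O or to A modulo ℤ², and for every v ∈ ℤ² with A + v ≠ O there exist t ∈ (0,1) and b ∈ B with O + t·(A + v − O) − b ∈ ℤ². -/
/-- A point of `ℝ²` lies in the integer lattice `ℤ²`. -/
def IsIntegerPoint (v : ℝ × ℝ) : Prop :=
  ∃ m n : ℤ, v = ((m : ℝ), (n : ℝ))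

/-!
Let `H = {0, 1/2}²`, a set of representatives of `(½ℤ²)/ℤ²`.

If `A ≢ O`, block with the four points `(O + A)/2 + h`, `h ∈ H`: the geodesic to `A + v` has
midpoint `(O + A)/2 + v/2`, and `v/2` is congruent to some `h ∈ H`. A congruence
`(O + A)/2 + h ≡ O` (or `≡ A`) would give `A - O ∈ 2ℤ² + 2h ⊆ ℤ²`.

If `A ≡ O`, then `w = A + v - O` is a nonzero lattice vector; write `w = 2ᵏu` with `u ∉ 2ℤ²`.
At `t = 2^{-(k+1)}` the geodesic passes through `O + u/2 ≡ O + h` for some `h ∈ H \ {0}`, so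
the three points `O + h`, `h ≠ 0`, block, and they are not congruent to `O ≡ A`.
-/
namespace FlatTorus

open Finset

noncomputable section

def integers : AddSubgroup ℝ := (Int.castAddHom ℝ).range

def integerLattice : AddSubgroup (ℝ × ℝ) := integers.prod integers

local notation "ℤ²" => integerLattice

lemma mem_integers {x : ℝ} : x ∈ integers ↔ ∃ m : ℤ, (m : ℝ) = x := by
  simp only [integers, AddMonoidHom.mem_range, Int.coe_castAddHom]

lemma isIntegerPoint_iff_mem {v : ℝ × ℝ} : IsIntegerPoint v ↔ v ∈ ℤ² := by
  simp only [IsIntegerPoint, integerLattice, AddSubgroup.mem_prod, mem_integers, Prod.ext_iff]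
  aesop

def halves : Finset ℝ := {0, 1 / 2}

def halfCorners : Finset (ℝ × ℝ) := halves ×ˢ halves

lemma card_halfCorners_le : #halfCorners ≤ 4 := by
  rw [halfCorners, card_product]
  exact Nat.mul_le_mul card_le_two card_le_two

lemma exists_mem_halves_half_sub_mem {x : ℝ} (hx : x ∈ integers) :
    ∃ r ∈ halves, 1 / 2 * x - r ∈ integers := by
  obtain ⟨m, rfl⟩ := mem_integers.1 hx
  obtain ⟨p, rfl | rfl⟩ := Int.even_or_odd' m
  · exact ⟨0, by simp [halves], mem_integers.2 ⟨p, by push_cast; ring⟩⟩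
  · exact ⟨1 / 2, by simp [halves], mem_integers.2 ⟨p, by push_cast; ring⟩⟩

lemma two_mul_mem_of_mem_halves {r : ℝ} (hr : r ∈ halves) : 2 * r ∈ integers := by
  simp only [halves, mem_insert, mem_singleton] at hr
  rcases hr with rfl | rfl
  · exact mem_integers.2 ⟨0, by simp⟩
  · exact mem_integers.2 ⟨1, by simp⟩

lemma eq_zero_of_mem_halves_of_mem {r : ℝ} (hr : r ∈ halves) (hrZ : r ∈ integers) : r = 0 := by
  simp only [halves, mem_insert, mem_singleton] at hr
  obtain ⟨m, hm⟩ := mem_integers.1 hrZ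
  rcases hr with rfl | rfl
  · rfl
  · have : (2 * m : ℤ) = 1 := by exact_mod_cast (by linarith : (2 * m : ℝ) = 1)
    omega

lemma exists_mem_halfCorners_half_smul_sub_mem {v : ℝ × ℝ} (hv : v ∈ ℤ²) :
    ∃ h ∈ halfCorners, (1 / 2 : ℝ) • v - h ∈ ℤ² := by
  obtain ⟨r₁, hr₁, h₁⟩ := exists_mem_halves_half_sub_mem hv.1
  obtain ⟨r₂, hr₂, h₂⟩ := exists_mem_halves_half_sub_mem hv.2
  exact ⟨(r₁, r₂), mem_product.2 ⟨hr₁, hr₂⟩, h₁, h₂⟩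

lemma two_smul_mem_of_mem_halfCorners {h : ℝ × ℝ} (hh : h ∈ halfCorners) : (2 : ℝ) • h ∈ ℤ² :=
  ⟨two_mul_mem_of_mem_halves (mem_product.1 hh).1, two_mul_mem_of_mem_halves (mem_product.1 hh).2⟩

lemma eq_zero_of_mem_halfCorners_of_mem {h : ℝ × ℝ} (hh : h ∈ halfCorners) (hZ : h ∈ ℤ²) :
    h = 0 :=
  Prod.ext (eq_zero_of_mem_halves_of_mem (mem_product.1 hh).1 hZ.1)
    (eq_zero_of_mem_halves_of_mem (mem_product.1 hh).2 hZ.2)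

lemma half_smul_add_notMem {x h : ℝ × ℝ} (hx : x ∉ ℤ²) (hh : h ∈ halfCorners) :
    (1 / 2 : ℝ) • x + h ∉ ℤ² := by
  intro hxh
  have hx' : x = (2 : ℝ) • ((1 / 2 : ℝ) • x + h) - (2 : ℝ) • h := by module
  refine hx (hx' ▸ sub_mem ?_ (two_smul_mem_of_mem_halfCorners hh))
  rw [two_smul]
  exact add_mem hxh hxh

lemma one_le_norm_of_mem {u : ℝ × ℝ} (hu : u ∈ ℤ²) (hu0 : u ≠ 0) : 1 ≤ ‖u‖ := by
  obtain ⟨u₁, u₂⟩ := u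
  obtain ⟨⟨m, rfl⟩, ⟨n, rfl⟩⟩ := And.imp mem_integers.1 mem_integers.1 hu
  rw [Prod.norm_mk, le_max_iff, Real.norm_eq_abs, Real.norm_eq_abs]
  have : m ≠ 0 ∨ n ≠ 0 := by
    by_contra! h
    exact hu0 (by simp [h.1, h.2])
  rcases this with h | h
  · left; exact_mod_cast Int.one_le_abs h
  · right; exact_mod_cast Int.one_le_abs h

lemma exists_pow_two_inv_smul_mem_half_smul_notMem {w : ℝ × ℝ} (hw : w ∈ ℤ²) (hw0 : w ≠ 0) :
    ∃ k : ℕ, (2 ^ k : ℝ)⁻¹ • w ∈ ℤ² ∧ (1 / 2 : ℝ) • (2 ^ k : ℝ)⁻¹ • w ∉ ℤ² := by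
  by_contra! h
  have hall : ∀ k : ℕ, (2 ^ k : ℝ)⁻¹ • w ∈ ℤ² := by
    intro k
    induction k with
    | zero => simpa using hw
    | succ k ih =>
      convert h k ih using 1
      rw [smul_smul, pow_succ, mul_inv, mul_comm, one_div]
  obtain ⟨k, hk⟩ := pow_unbounded_of_one_lt ‖w‖ one_lt_two
  have h1 := one_le_norm_of_mem (hall k) (smul_ne_zero (by positivity) hw0)
  rw [norm_smul, norm_inv, norm_pow, Real.norm_two, inv_mul_eq_div, one_le_div (by positivity)] at h1
  linarith

def Blocks (B : Finset (ℝ × ℝ)) (O A : ℝ × ℝ) : Prop :=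
  (∀ b ∈ B, b - O ∉ ℤ² ∧ b - A ∉ ℤ²) ∧
    ∀ v ∈ ℤ², A + v ≠ O → ∃ t ∈ Set.Ioo (0 : ℝ) 1, ∃ b ∈ B, O + t • (A + v - O) - b ∈ ℤ²

lemma blocks_image_midpoint_add {O A : ℝ × ℝ} (hAO : A - O ∉ ℤ²) :
    Blocks (halfCorners.image ((1 / 2 : ℝ) • (O + A) + ·)) O A := by
  refine ⟨fun b hb ↦ ?_, fun v hv _ ↦ ?_⟩
  · obtain ⟨h, hh, rfl⟩ := mem_image.1 hb
    have hOA : O - A ∉ ℤ² := by rwa [← neg_sub, neg_mem_iff]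
    constructor
    · convert half_smul_add_notMem hAO hh using 2
      module
    · convert half_smul_add_notMem hOA hh using 2
      module
  · obtain ⟨h, hh, hvh⟩ := exists_mem_halfCorners_half_smul_sub_mem hv
    refine ⟨1 / 2, by norm_num, _, mem_image_of_mem _ hh, ?_⟩
    convert hvh using 1
    module

lemma blocks_image_add_erase_zero {O A : ℝ × ℝ} (hAO : A - O ∈ ℤ²) :
    Blocks ((halfCorners.erase 0).image (O + ·)) O A := by
  refine ⟨fun b hb ↦ ?_, fun v hv hne ↦ ?_⟩
  · obtain ⟨h, hh, rfl⟩ := mem_image.1 hb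
    obtain ⟨hh0, hh⟩ := mem_erase.1 hh
    have hhZ : h ∉ ℤ² := fun hZ ↦ hh0 (eq_zero_of_mem_halfCorners_of_mem hh hZ)
    refine ⟨by simpa using hhZ, fun hA ↦ hhZ ?_⟩
    simpa using add_mem hA hAO
  · have hw : A + v - O ∈ ℤ² := by simpa [add_sub_right_comm] using add_mem hAO hv
    obtain ⟨k, hkmem, hhalf⟩ :=
      exists_pow_two_inv_smul_mem_half_smul_notMem hw (sub_ne_zero.2 hne)
    obtain ⟨h, hh, hmem⟩ := exists_mem_halfCorners_half_smul_sub_mem hkmem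
    have hh0 : h ≠ 0 := by
      rintro rfl
      exact hhalf (by simpa using hmem)
    refine ⟨1 / 2 * (2 ^ k)⁻¹, ⟨by positivity, ?_⟩, O + h,
      mem_image_of_mem _ (mem_erase.2 ⟨hh0, hh⟩), ?_⟩
    · have hinv : (2 ^ k : ℝ)⁻¹ ≤ 1 := inv_le_one_of_one_le₀ (one_le_pow₀ one_le_two)
      linarith
    · convert hmem using 1
      module

lemma exists_blocks (O A : ℝ × ℝ) : ∃ B : Finset (ℝ × ℝ), #B ≤ 4 ∧ Blocks B O A := by
  by_cases hAO : A - O ∈ ℤ²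
  · exact ⟨_, card_image_le.trans (card_erase_le.trans card_halfCorners_le),
      blocks_image_add_erase_zero hAO⟩
  · exact ⟨_, card_image_le.trans card_halfCorners_le, blocks_image_midpoint_add hAO⟩

end

end FlatTorus

/-- The flat torus `ℝ²/ℤ²` has the finite blocking property with at most 4 blocking
points: for every pair of points `O, A ∈ ℝ²` there is a finite set `B ⊆ ℝ²` with at
most 4 elements, none of whose members is congruent to `O` or to `A` modulo `ℤ²`,
such that every geodesic from `O` to `A` (i.e. the projection of the segment from
`O` to `A + v` for `v ∈ ℤ²` with `A + v ≠ O`) has an interior point congruent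
modulo `ℤ²` to a point of `B`. -/
theorem torus_finite_blocking_four_points (O A : ℝ × ℝ) :
    ∃ B : Finset (ℝ × ℝ), B.card ≤ 4 ∧
      (∀ b ∈ B, ¬ IsIntegerPoint (b - O) ∧ ¬ IsIntegerPoint (b - A)) ∧
      (∀ v : ℝ × ℝ, IsIntegerPoint v → A + v ≠ O →
        ∃ t ∈ Set.Ioo (0 : ℝ) 1, ∃ b ∈ B,
          IsIntegerPoint (O + t • (A + v - O) - b)) := by
  simp only [FlatTorus.isIntegerPoint_iff_mem]
  exact FlatTorus.exists_blocks O A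
end

section
/- Let O, A ∈ ℝ² with A − O ∉ ℤ². For i, j ∈ {0,1} set M_{i,j} = (O + A)/2 + (i/2, j/2). Then none of the four points M_{i,j} is congruent to O or to A modulo ℤ², and for every v ∈ ℤ² the midpoint O + (1/2)·(A + v − O) of the segment from O to A + v is congruent modulo ℤ² to M_{i,j} for some i, j ∈ {0,1}. In particular the four points M_{i,j} block every geodesic from O to A on the flat torus ℝ²/ℤ². -/
namespace IsIntegerPoint

variable {v w : ℝ × ℝ}

lemma add (hv : IsIntegerPoint v) (hw : IsIntegerPoint w) : IsIntegerPoint (v + w) := by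
  obtain ⟨m, n, rfl⟩ := hv
  obtain ⟨m', n', rfl⟩ := hw
  exact ⟨m + m', n + n', by push_cast; rfl⟩

lemma neg (hv : IsIntegerPoint v) : IsIntegerPoint (-v) := by
  obtain ⟨m, n, rfl⟩ := hv
  exact ⟨-m, -n, by push_cast; rfl⟩

lemma sub (hv : IsIntegerPoint v) (hw : IsIntegerPoint w) : IsIntegerPoint (v - w) := by
  simpa only [sub_eq_add_neg] using hv.add hw.neg

lemma nsmul (hv : IsIntegerPoint v) (k : ℕ) : IsIntegerPoint (k • v) := by
  induction k with
  | zero => exact ⟨0, 0, by simp [Prod.zero_eq_mk]⟩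
  | succ k ih => simpa only [succ_nsmul] using ih.add hv

lemma natCast_pair (i j : ℕ) : IsIntegerPoint ((i : ℝ), (j : ℝ)) :=
  ⟨i, j, by push_cast; rfl⟩

end IsIntegerPoint

lemma Int.exists_fin_two_half_sub_half_eq (m : ℤ) :
    ∃ (i : Fin 2) (k : ℤ), (m : ℝ) / 2 - ((i : ℕ) : ℝ) / 2 = k := by
  obtain ⟨k, rfl | rfl⟩ := Int.even_or_odd' m
  · exact ⟨0, k, by simp⟩
  · exact ⟨1, k, by push_cast; norm_num; ring⟩

lemma IsIntegerPoint.exists_fin_two_half_smul_sub {v : ℝ × ℝ} (hv : IsIntegerPoint v) :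
    ∃ i j : Fin 2, IsIntegerPoint (((1 : ℝ) / 2) • v - (((i : ℕ) : ℝ) / 2, ((j : ℕ) : ℝ) / 2)) := by
  obtain ⟨m, n, rfl⟩ := hv
  obtain ⟨i, k, hk⟩ := Int.exists_fin_two_half_sub_half_eq m
  obtain ⟨j, l, hl⟩ := Int.exists_fin_two_half_sub_half_eq n
  refine ⟨i, j, k, l, ?_⟩
  ext <;> simp only [Prod.fst_sub, Prod.snd_sub, Prod.smul_mk, smul_eq_mul] <;> linarith

/-- Let `O, A ∈ ℝ²` with `A − O ∉ ℤ²`, and for `i, j ∈ {0,1}` set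
`M i j = (O + A)/2 + (i/2, j/2)`.  Then none of the four points `M i j` is congruent
to `O` or to `A` modulo `ℤ²`; for every `v ∈ ℤ²` the midpoint `O + (1/2)(A + v − O)`
of the segment from `O` to `A + v` is congruent modulo `ℤ²` to some `M i j`; and in
particular the four points `M i j` block every geodesic from `O` to `A` on the flat
torus `ℝ²/ℤ²`. -/
theorem four_midpoints_block (O A : ℝ × ℝ)
    (hOA : ¬ IsIntegerPoint (A - O))
    (M : Fin 2 → Fin 2 → ℝ × ℝ)
    (hM : ∀ i j : Fin 2,
      M i j = ((1 : ℝ) / 2) • (O + A) + (((i : ℕ) : ℝ) / 2, ((j : ℕ) : ℝ) / 2)) :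
    (∀ i j : Fin 2, ¬ IsIntegerPoint (M i j - O) ∧ ¬ IsIntegerPoint (M i j - A)) ∧
    (∀ v : ℝ × ℝ, IsIntegerPoint v →
      ∃ i j : Fin 2, IsIntegerPoint (O + ((1 : ℝ) / 2) • (A + v - O) - M i j)) ∧
    (∀ v : ℝ × ℝ, IsIntegerPoint v → A + v ≠ O →
      ∃ t ∈ Set.Ioo (0 : ℝ) 1, ∃ i j : Fin 2,
        IsIntegerPoint (O + t • (A + v - O) - M i j)) := by
  have midpoint (v : ℝ × ℝ) (hv : IsIntegerPoint v) :
      ∃ i j : Fin 2, IsIntegerPoint (O + ((1 : ℝ) / 2) • (A + v - O) - M i j) := by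
    obtain ⟨i, j, h⟩ := hv.exists_fin_two_half_smul_sub
    refine ⟨i, j, ?_⟩
    convert h using 1
    rw [hM]
    ext <;> simp <;> ring
  refine ⟨fun i j => ⟨fun hO => hOA ?_, fun hA => hOA ?_⟩, midpoint,
    fun v hv _ => ⟨1 / 2, ⟨by norm_num, by norm_num⟩, midpoint v hv⟩⟩
  · have hdouble : A - O = 2 • (M i j - O) - (((i : ℕ) : ℝ), ((j : ℕ) : ℝ)) := by
      rw [hM]
      ext <;> simp <;> ring
    rw [hdouble]
    exact (hO.nsmul 2).sub (IsIntegerPoint.natCast_pair i j)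
  · have hdouble : A - O = (((i : ℕ) : ℝ), ((j : ℕ) : ℝ)) - 2 • (M i j - A) := by
      rw [hM]
      ext <;> simp <;> ring
    rw [hdouble]
    exact (IsIntegerPoint.natCast_pair i j).sub (hA.nsmul 2)
end

section
/- For every v ∈ ℤ² with v ≠ 0 there exists t ∈ (0,1) such that t·v is congruent modulo ℤ² to one of the three points (1/2, 0), (0, 1/2), (1/2, 1/2). Consequently, for every O ∈ ℝ², every nonconstant closed geodesic of the flat torus ℝ²/ℤ² based at O passes through one of the three points O + (1/2, 0), O + (0, 1/2), O + (1/2, 1/2) taken modulo ℤ². -/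
def halfPeriodPoints : Set (ℝ × ℝ) :=
  {((1 : ℝ) / 2, (0 : ℝ)), ((0 : ℝ), (1 : ℝ) / 2), ((1 : ℝ) / 2, (1 : ℝ) / 2)}

lemma Int.not_even_and_even_of_gcd_eq_one {a b : ℤ} (h : Int.gcd a b = 1) :
    ¬ (Even a ∧ Even b) := by
  rintro ⟨ha, hb⟩
  have h2 := Int.dvd_gcd (even_iff_two_dvd.mp ha) (even_iff_two_dvd.mp hb)
  rw [h] at h2
  norm_num at h2

lemma exists_halfPeriodPoint_sub_half_isIntegerPoint {a b : ℤ} (hab : ¬ (Even a ∧ Even b)) :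
    ∃ c ∈ halfPeriodPoints, IsIntegerPoint (((a : ℝ) / 2, (b : ℝ) / 2) - c) := by
  rcases Int.even_or_odd' a with ⟨k, rfl | rfl⟩ <;>
    rcases Int.even_or_odd' b with ⟨l, rfl | rfl⟩
  · exact absurd ⟨even_two_mul k, even_two_mul l⟩ hab
  · refine ⟨(0, 1 / 2), by simp [halfPeriodPoints], k, l, ?_⟩
    push_cast
    ext <;> simp only [Prod.fst_sub, Prod.snd_sub] <;> ring
  · refine ⟨(1 / 2, 0), by simp [halfPeriodPoints], k, l, ?_⟩
    push_cast
    ext <;> simp only [Prod.fst_sub, Prod.snd_sub] <;> ring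
  · refine ⟨(1 / 2, 1 / 2), by simp [halfPeriodPoints], k, l, ?_⟩
    push_cast
    ext <;> simp only [Prod.fst_sub, Prod.snd_sub] <;> ring

lemma IsIntegerPoint.exists_smul_sub_halfPeriodPoint {v : ℝ × ℝ} (hv : IsIntegerPoint v)
    (hv0 : v ≠ 0) :
    ∃ t ∈ Set.Ioo (0 : ℝ) 1, ∃ c ∈ halfPeriodPoints, IsIntegerPoint (t • v - c) := by
  obtain ⟨m, n, rfl⟩ := hv
  have hgcd : 0 < Int.gcd m n := by
    refine Int.gcd_pos_iff.mpr ?_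
    by_contra! h
    exact hv0 (by simp [h.1, h.2])
  obtain ⟨g, m', n', hg, hcop, rfl, rfl⟩ := Int.exists_gcd_one' hgcd
  have hg1 : (1 : ℝ) ≤ g := by exact_mod_cast hg
  refine ⟨1 / (2 * g), ⟨by positivity, (div_lt_one (by positivity)).mpr (by linarith)⟩, ?_⟩
  have hhalf : (1 / (2 * (g : ℝ))) • (((m' * g : ℤ) : ℝ), ((n' * g : ℤ) : ℝ))
      = ((m' : ℝ) / 2, (n' : ℝ) / 2) := by
    push_cast
    ext <;> (simp only [Prod.smul_mk, smul_eq_mul]; field_simp)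
  rw [hhalf]
  exact exists_halfPeriodPoint_sub_half_isIntegerPoint
    (Int.not_even_and_even_of_gcd_eq_one hcop)

/-- For every nonzero `v ∈ ℤ²` there exists `t ∈ (0,1)` such that `t • v` is
congruent modulo `ℤ²` to one of the three points `(1/2, 0)`, `(0, 1/2)`,
`(1/2, 1/2)`.  Consequently, for every `O ∈ ℝ²`, every nonconstant closed geodesic
of the flat torus `ℝ²/ℤ²` based at `O` (the projection of the segment from `O` to
`O + v`, `v ∈ ℤ²`, `v ≠ 0`) passes through one of the three points `O + (1/2, 0)`,
`O + (0, 1/2)`, `O + (1/2, 1/2)` taken modulo `ℤ²`. -/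
theorem three_points_block_closed_geodesics :
    (∀ v : ℝ × ℝ, IsIntegerPoint v → v ≠ 0 →
      ∃ t ∈ Set.Ioo (0 : ℝ) 1,
        ∃ b ∈ ({((1 : ℝ) / 2, (0 : ℝ)), ((0 : ℝ), (1 : ℝ) / 2),
                ((1 : ℝ) / 2, (1 : ℝ) / 2)} : Set (ℝ × ℝ)),
          IsIntegerPoint (t • v - b)) ∧
    (∀ O : ℝ × ℝ, ∀ v : ℝ × ℝ, IsIntegerPoint v → v ≠ 0 →
      ∃ t ∈ Set.Ioo (0 : ℝ) 1,
        ∃ b ∈ ({((1 : ℝ) / 2, (0 : ℝ)), ((0 : ℝ), (1 : ℝ) / 2),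
                ((1 : ℝ) / 2, (1 : ℝ) / 2)} : Set (ℝ × ℝ)),
          IsIntegerPoint ((O + t • v) - (O + b))) := by
  refine ⟨fun v hv hv0 => hv.exists_smul_sub_halfPeriodPoint hv0, fun O v hv hv0 => ?_⟩
  simpa only [add_sub_add_left_eq_sub, halfPeriodPoints] using
    hv.exists_smul_sub_halfPeriodPoint hv0
end

section
/- Let (v₁, v₂) be a basis of ℝ² over ℝ and let Λ = {m·v₁ + n·v₂ : m, n ∈ ℤ} be the associated lattice. Then the flat torus ℝ²/Λ has the finite blocking property with at most 4 blocking points: for every pair of points O, A ∈ ℝ² there exists a finite set B ⊆ ℝ² with at most 4 elements such that no element of B lies in (O + Λ) ∪ (A + Λ), and for every w ∈ Λ with A + w ≠ O there exist t ∈ (0,1) and b ∈ B with O + t·(A + w − O) − b ∈ Λ. -/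
/-!
Write `u = A + w - O` for the direction of a geodesic. Every point `x` with `2x ≡ O + A`
modulo `Λ` is congruent to one of the four midpoints of `O` and `A + e v₁ + f v₂`,
`e, f ∈ {0, 1}`, and such an `x` is congruent to `O` if and only if it is congruent to `A`.
So it suffices to find `t ∈ (0, 1)` with `t u ∉ Λ` and `2 t u ≡ u`: take `t = 1/2` if
`u ∉ Λ`, and otherwise `t = 2⁻ᵏ⁻¹` where `2⁻ᵏ u ∈ Λ ∌ 2⁻ᵏ⁻¹ u`; such a `k` exists because
no nonzero vector of `Λ` is divisible in `Λ` by every power of `2`.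
-/

open Set

/-- Membership in the lattice spanned over `ℤ` by two vectors `v₁, v₂` of `ℝ²`. -/
def InLattice (v₁ v₂ w : ℝ × ℝ) : Prop :=
  ∃ m n : ℤ, w = (m : ℝ) • v₁ + (n : ℝ) • v₂

lemma AddSubgroup.mem_iff_of_add_mem {G : Type*} [AddCommGroup G] {L : AddSubgroup G}
    {x y : G} (h : x + y ∈ L) : x ∈ L ↔ y ∈ L :=
  ⟨fun hx => (L.add_mem_cancel_left hx).mp h, fun hy => (L.add_mem_cancel_right hy).mp h⟩

lemma exists_smul_notMem_and_two_nsmul_sub_mem {V : Type*} [AddCommGroup V] [Module ℝ V]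
    {L : AddSubgroup V} {u : V} (hu : ∃ k : ℕ, ((2 : ℝ) ^ k)⁻¹ • u ∉ L) :
    ∃ t ∈ Ioo (0 : ℝ) 1, t • u ∉ L ∧ 2 • (t • u) - u ∈ L := by
  by_cases huL : u ∈ L
  · classical
    have hK : Nat.find hu ≠ 0 := by
      intro h0
      simpa [h0, huL] using Nat.find_spec hu
    obtain ⟨k, hk⟩ := Nat.exists_eq_succ_of_ne_zero hK
    have hprev : ((2 : ℝ) ^ k)⁻¹ • u ∈ L := not_not.mp (Nat.find_min hu (by omega))
    have hdouble : 2 • (((2 : ℝ) ^ (k + 1))⁻¹ • u) = ((2 : ℝ) ^ k)⁻¹ • u := by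
      rw [← Nat.cast_smul_eq_nsmul ℝ, smul_smul, pow_succ, mul_inv, mul_left_comm]
      norm_num
    refine ⟨((2 : ℝ) ^ (k + 1))⁻¹, ⟨by positivity, ?_⟩, by simpa [hk] using Nat.find_spec hu, ?_⟩
    · exact inv_lt_one_of_one_lt₀ (one_lt_pow₀ one_lt_two k.succ_ne_zero)
    · exact sub_mem (hdouble ▸ hprev) huL
  · have hdouble : 2 • ((2 : ℝ)⁻¹ • u) = u := by
      rw [← Nat.cast_smul_eq_nsmul ℝ, smul_smul]
      norm_num
    refine ⟨2⁻¹, by norm_num, fun h => huL (hdouble ▸ L.nsmul_mem h 2), by simp [hdouble]⟩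

def lattice (v₁ v₂ : ℝ × ℝ) : AddSubgroup (ℝ × ℝ) where
  carrier := {w | InLattice v₁ v₂ w}
  add_mem' := by
    rintro _ _ ⟨m, n, rfl⟩ ⟨m', n', rfl⟩
    exact ⟨m + m', n + n', by push_cast; module⟩
  zero_mem' := ⟨0, 0, by simp⟩
  neg_mem' := by
    rintro _ ⟨m, n, rfl⟩
    exact ⟨-m, -n, by push_cast; module⟩

lemma mem_lattice {v₁ v₂ w : ℝ × ℝ} : w ∈ lattice v₁ v₂ ↔ InLattice v₁ v₂ w := Iff.rfl

lemma exists_inv_two_pow_smul_notMem_lattice {v₁ v₂ : ℝ × ℝ}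
    (hindep : LinearIndependent ℝ ![v₁, v₂]) {u : ℝ × ℝ} (hu : u ≠ 0) :
    ∃ k : ℕ, ((2 : ℝ) ^ k)⁻¹ • u ∉ lattice v₁ v₂ := by
  by_contra! hdiv
  obtain ⟨m, n, rfl⟩ : u ∈ lattice v₁ v₂ := by simpa using hdiv 0
  set N := m.natAbs + n.natAbs
  obtain ⟨p, q, hpq⟩ := hdiv N
  have hcoord : (m : ℝ) = 2 ^ N * p ∧ (n : ℝ) = 2 ^ N * q := by
    refine hindep.eq_of_pair ?_
    rw [mul_smul, mul_smul, ← smul_add, ← hpq, smul_inv_smul₀ (by positivity)]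
  have hzero : ∀ {k r : ℤ}, k.natAbs ≤ N → (k : ℝ) = 2 ^ N * r → k = 0 := fun hk hr =>
    Int.eq_zero_of_dvd_of_natAbs_lt_natAbs ⟨_, by exact_mod_cast hr⟩
      (by simpa [Int.natAbs_pow] using hk.trans_lt N.lt_two_pow_self)
  exact hu (by simp [hzero (by omega) hcoord.1, hzero (by omega) hcoord.2])

noncomputable def latticeMidpoints (v₁ v₂ O A : ℝ × ℝ) : Finset (ℝ × ℝ) :=
  (Finset.Ico (0 : ℤ) 2 ×ˢ Finset.Ico (0 : ℤ) 2).image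
    fun ef => (2 : ℝ)⁻¹ • (O + (A + (ef.1 : ℝ) • v₁ + (ef.2 : ℝ) • v₂))

lemma card_latticeMidpoints_le (v₁ v₂ O A : ℝ × ℝ) : (latticeMidpoints v₁ v₂ O A).card ≤ 4 :=
  Finset.card_image_le.trans (by decide)

lemma exists_mem_latticeMidpoints_sub_mem_lattice {v₁ v₂ O A x : ℝ × ℝ}
    (h : (x - O) + (x - A) ∈ lattice v₁ v₂) :
    ∃ b ∈ latticeMidpoints v₁ v₂ O A, x - b ∈ lattice v₁ v₂ := by
  obtain ⟨m, n, hmn⟩ := h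
  have hmod : ∀ k : ℤ, k % 2 ∈ Finset.Ico (0 : ℤ) 2 := fun k =>
    Finset.mem_Ico.mpr ⟨Int.emod_nonneg k two_ne_zero, Int.emod_lt_of_pos k two_pos⟩
  have hsplit : ∀ k : ℤ, (k : ℝ) = ((k % 2 : ℤ) : ℝ) + 2 * ((k / 2 : ℤ) : ℝ) := fun k => by
    exact_mod_cast (Int.emod_add_mul_ediv k 2).symm
  refine ⟨_, Finset.mem_image_of_mem _ (Finset.mk_mem_product (hmod m) (hmod n)),
    m / 2, n / 2, ?_⟩
  rw [hsplit m, hsplit n] at hmn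
  linear_combination (norm := module) (2 : ℝ)⁻¹ • hmn

theorem lattice_torus_finite_blocking_four_points_general (v₁ v₂ : ℝ × ℝ)
    (hindep : LinearIndependent ℝ ![v₁, v₂])
    (O A : ℝ × ℝ) :
    ∃ B : Finset (ℝ × ℝ), B.card ≤ 4 ∧
      (∀ b ∈ B, ¬ InLattice v₁ v₂ (b - O) ∧ ¬ InLattice v₁ v₂ (b - A)) ∧
      (∀ w : ℝ × ℝ, InLattice v₁ v₂ w → A + w ≠ O →
        ∃ t ∈ Set.Ioo (0 : ℝ) 1, ∃ b ∈ B,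
          InLattice v₁ v₂ (O + t • (A + w - O) - b)) := by
  classical
  set L := lattice v₁ v₂
  refine ⟨(latticeMidpoints v₁ v₂ O A).filter
      fun b => ¬ InLattice v₁ v₂ (b - O) ∧ ¬ InLattice v₁ v₂ (b - A),
    (Finset.card_filter_le _ _).trans (card_latticeMidpoints_le v₁ v₂ O A),
    fun b hb => (Finset.mem_filter.mp hb).2, fun w hw hwO => ?_⟩
  obtain ⟨t, ht, htu, hdouble⟩ := exists_smul_notMem_and_two_nsmul_sub_mem
    (exists_inv_two_pow_smul_notMem_lattice hindep (sub_ne_zero.mpr hwO))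
  set P := O + t • (A + w - O)
  have hPO : P - O ∉ L := by simpa [P] using htu
  have hsum : (P - O) + (P - A) ∈ L := by
    convert add_mem hdouble (mem_lattice.mpr hw) using 1
    simp only [P]
    module
  have hPA : P - A ∉ L := (AddSubgroup.mem_iff_of_add_mem hsum).not.mp hPO
  obtain ⟨b, hb, hPb⟩ := exists_mem_latticeMidpoints_sub_mem_lattice hsum
  refine ⟨t, ht, b, Finset.mem_filter.mpr ⟨hb, ?_, ?_⟩, hPb⟩
  · exact fun hbO => hPO (by simpa using add_mem hPb hbO)
  · exact fun hbA => hPA (by simpa using add_mem hPb hbA)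

/-- Let `(v₁, v₂)` be a basis of `ℝ²` over `ℝ` and `Λ = ℤv₁ + ℤv₂` the associated
lattice.  The flat torus `ℝ²/Λ` has the finite blocking property with at most 4
blocking points: for every pair `O, A ∈ ℝ²` there is a finite set `B ⊆ ℝ²` with at
most 4 elements, disjoint from `(O + Λ) ∪ (A + Λ)`, such that every geodesic from
`O` to `A` (the projection of the segment from `O` to `A + w`, `w ∈ Λ`,
`A + w ≠ O`) has an interior point congruent modulo `Λ` to a point of `B`. -/
theorem lattice_torus_finite_blocking_four_points (v₁ v₂ : ℝ × ℝ)
    (hindep : LinearIndependent ℝ ![v₁, v₂])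
    (hspan : Submodule.span ℝ ({v₁, v₂} : Set (ℝ × ℝ)) = ⊤)
    (O A : ℝ × ℝ) :
    ∃ B : Finset (ℝ × ℝ), B.card ≤ 4 ∧
      (∀ b ∈ B, ¬ InLattice v₁ v₂ (b - O) ∧ ¬ InLattice v₁ v₂ (b - A)) ∧
      (∀ w : ℝ × ℝ, InLattice v₁ v₂ w → A + w ≠ O →
        ∃ t ∈ Set.Ioo (0 : ℝ) 1, ∃ b ∈ B,
          InLattice v₁ v₂ (O + t • (A + w - O) - b)) :=
  lattice_torus_finite_blocking_four_points_general v₁ v₂ hindep O A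
end

section
/- The unit square billiard has the finite blocking property: for every pair of points O, A ∈ [0,1]² there exists a finite set B ⊆ [0,1]² with O ∉ B and A ∉ B such that for all O', A' ∈ ℝ² with Φ(O') = O, Φ(A') = A and O' ≠ A', there exists t ∈ (0,1) with Φ(O' + t·(A' − O')) ∈ B. -/
/-
After unfolding, a billiard trajectory from `O` to `A` is the image under `Φ` of a segment `[X, Y]`
with `Φ X = O`, `Φ Y = A`. Coordinatewise `X ≡ ±O` and `Y ≡ ±A` modulo `2`, so `Φ` of the midpoint
`M` of `[X, Y]` takes one of at most `16` values depending only on `O` and `A`; let `B` be those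
values other than `O` and `A`. If `Φ M = O` (or `Φ M = A`), the half `[M, Y]` (or `[X, M]`) is again
such a segment, of half the length. The fibres of `Φ` are uniformly discrete, so segments that are
too short cannot be halved this way: after finitely many halvings a midpoint lands in `B`.
-/

open Set

theorem exists_pos_forall_le_abs_sub_intCast (c : ℝ) :
    ∃ ε > 0, ∀ z : ℤ, c ≠ z → ε ≤ |c - z| := by
  by_cases hc : c = round c
  · refine ⟨1, one_pos, fun z hz => ?_⟩
    rw [hc] at hz ⊢
    have : round c ≠ z := by exact_mod_cast hz
    rw [← Int.cast_sub, ← Int.cast_abs]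
    exact_mod_cast Int.one_le_abs (sub_ne_zero.mpr this)
  · exact ⟨|c - round c|, abs_pos.mpr (sub_ne_zero.mpr hc), fun z _ => round_le c z⟩

theorem exists_sub_two_mul_intCast_mem_Icc (x : ℝ) : ∃ k : ℤ, x - 2 * k ∈ Icc (-1 : ℝ) 1 := by
  refine ⟨round (x / 2), abs_le.mp ?_⟩
  have := abs_sub_round (x / 2)
  rw [show x - 2 * round (x / 2) = 2 * (x / 2 - round (x / 2)) by ring, abs_mul, abs_two]
  linarith

theorem Prod.fst_midpoint {R V W : Type*} [Ring R] [Invertible (2 : R)] [AddCommGroup V]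
    [Module R V] [AddCommGroup W] [Module R W] (x y : V × W) :
    (midpoint R x y).1 = midpoint R x.1 y.1 :=
  AffineMap.fst.map_midpoint x y

theorem Prod.snd_midpoint {R V W : Type*} [Ring R] [Invertible (2 : R)] [AddCommGroup V]
    [Module R V] [AddCommGroup W] [Module R W] (x y : V × W) :
    (midpoint R x y).2 = midpoint R x.2 y.2 :=
  AffineMap.snd.map_midpoint x y

theorem exists_pos_pairwise_le_dist_prodMap {α α' β β' : Type*} [PseudoMetricSpace α]
    [PseudoMetricSpace α'] {f : α → β} {g : α' → β'} {b : β × β'}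
    (hf : ∃ δ > 0, (f ⁻¹' {b.1}).Pairwise (δ ≤ dist · ·))
    (hg : ∃ δ > 0, (g ⁻¹' {b.2}).Pairwise (δ ≤ dist · ·)) :
    ∃ δ > 0, (Prod.map f g ⁻¹' {b}).Pairwise (δ ≤ dist · ·) := by
  obtain ⟨δ₁, hδ₁, hf⟩ := hf
  obtain ⟨δ₂, hδ₂, hg⟩ := hg
  refine ⟨min δ₁ δ₂, lt_min hδ₁ hδ₂, fun X hX Y hY hXY => ?_⟩
  rw [mem_preimage, mem_singleton_iff, Prod.ext_iff] at hX hY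
  rw [Prod.dist_eq]
  rcases not_and_or.mp (mt Prod.ext_iff.mpr hXY) with h | h
  · exact (min_le_left _ _).trans ((hf hX.1 hY.1 h).trans (le_max_left _ _))
  · exact (min_le_right _ _).trans ((hg hX.2 hY.2 h).trans (le_max_right _ _))

section Bisection

variable {E β : Type*} [NormedAddCommGroup E] [NormedSpace ℝ E] {f : E → β} {O A : β}
  {B : Set β} {δ : ℝ}

theorem add_smul_sub_eq_midpoint (X Y : E) : X + (1 / 2 : ℝ) • (Y - X) = midpoint ℝ X Y := by
  rw [midpoint_eq_smul_add, invOf_eq_inv]; module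

theorem dist_left_midpoint_eq_half (X Y : E) : dist X (midpoint ℝ X Y) = dist X Y / 2 := by
  rw [dist_left_midpoint, Real.norm_two, inv_mul_eq_div]

theorem dist_midpoint_right_eq_half (X Y : E) : dist (midpoint ℝ X Y) Y = dist X Y / 2 := by
  rw [dist_midpoint_right, Real.norm_two, inv_mul_eq_div]

theorem exists_map_add_smul_mem_of_map_midpoint_mem {X Y : E} (h : f (midpoint ℝ X Y) ∈ B) :
    ∃ t ∈ Ioo (0 : ℝ) 1, f (X + t • (Y - X)) ∈ B :=
  ⟨1 / 2, ⟨by norm_num, by norm_num⟩, by rwa [add_smul_sub_eq_midpoint]⟩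

theorem exists_map_add_smul_mem_of_right_half {X Y : E}
    (h : ∃ s ∈ Ioo (0 : ℝ) 1, f (midpoint ℝ X Y + s • (Y - midpoint ℝ X Y)) ∈ B) :
    ∃ t ∈ Ioo (0 : ℝ) 1, f (X + t • (Y - X)) ∈ B := by
  obtain ⟨s, ⟨hs₀, hs₁⟩, hsB⟩ := h
  refine ⟨(1 + s) / 2, ⟨by linarith, by linarith⟩, ?_⟩
  convert hsB using 2
  rw [← add_smul_sub_eq_midpoint]; module

theorem exists_map_add_smul_mem_of_left_half {X Y : E}
    (h : ∃ s ∈ Ioo (0 : ℝ) 1, f (X + s • (midpoint ℝ X Y - X)) ∈ B) :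
    ∃ t ∈ Ioo (0 : ℝ) 1, f (X + t • (Y - X)) ∈ B := by
  obtain ⟨s, ⟨hs₀, hs₁⟩, hsB⟩ := h
  refine ⟨s / 2, ⟨by linarith, by linarith⟩, ?_⟩
  convert hsB using 2
  rw [← add_smul_sub_eq_midpoint]; module

theorem exists_map_add_smul_mem_of_map_midpoint_mem_insert
    (hO : (f ⁻¹' {O}).Pairwise (δ ≤ dist · ·)) (hA : (f ⁻¹' {A}).Pairwise (δ ≤ dist · ·))
    (hmid : ∀ X Y, f X = O → f Y = A → f (midpoint ℝ X Y) ∈ insert O (insert A B))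
    (hδ : 0 < δ) {X Y : E} (hX : f X = O) (hY : f Y = A) (hXY : X ≠ Y) :
    ∃ t ∈ Ioo (0 : ℝ) 1, f (X + t • (Y - X)) ∈ B := by
  suffices key : ∀ n : ℕ, ∀ X Y, f X = O → f Y = A → X ≠ Y → dist X Y < 2 ^ n * δ →
      ∃ t ∈ Ioo (0 : ℝ) 1, f (X + t • (Y - X)) ∈ B by
    obtain ⟨n, hn⟩ := pow_unbounded_of_one_lt (dist X Y / δ) one_lt_two
    exact key n X Y hX hY hXY ((div_lt_iff₀ hδ).mp hn)
  intro n
  induction n with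
  | zero =>
    intro X Y hX hY hXY hdist
    rw [pow_zero, one_mul] at hdist
    rcases hmid X Y hX hY with hMO | hMA | hMB
    · have := hO hX hMO (mt (left_eq_midpoint_iff ℝ).mp hXY)
      linarith [dist_left_midpoint_eq_half X Y]
    · have := hA hMA hY (mt (midpoint_eq_right_iff ℝ).mp hXY)
      linarith [dist_midpoint_right_eq_half X Y]
    · exact exists_map_add_smul_mem_of_map_midpoint_mem hMB
  | succ n ih =>
    intro X Y hX hY hXY hdist
    rw [pow_succ] at hdist
    rcases hmid X Y hX hY with hMO | hMA | hMB
    · refine exists_map_add_smul_mem_of_right_half <|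
        ih _ Y hMO hY (mt (midpoint_eq_right_iff ℝ).mp hXY) ?_
      linarith [dist_midpoint_right_eq_half X Y]
    · refine exists_map_add_smul_mem_of_left_half <|
        ih X _ hX hMA (mt (left_eq_midpoint_iff ℝ).mp hXY) ?_
      linarith [dist_left_midpoint_eq_half X Y]
    · exact exists_map_add_smul_mem_of_map_midpoint_mem hMB

end Bisection

structure IsTriangleWave (φ : ℝ → ℝ) : Prop where
  periodic : Function.Periodic φ 2
  eq_abs : ∀ x ∈ Icc (-1 : ℝ) 1, φ x = |x|

noncomputable def midpointValues (φ : ℝ → ℝ) (o a : ℝ) : Finset ℝ :=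
  {φ ((o + a) / 2), φ ((o + a) / 2 + 1), φ ((o - a) / 2), φ ((o - a) / 2 + 1)}

namespace IsTriangleWave

variable {φ : ℝ → ℝ}

theorem eq_abs_sub (hφ : IsTriangleWave φ) {x : ℝ} {k : ℤ} (hk : x - 2 * k ∈ Icc (-1 : ℝ) 1) :
    φ x = |x - 2 * k| := by
  rw [← hφ.eq_abs _ hk, mul_comm, hφ.periodic.sub_int_mul_eq]

theorem mem_Icc (hφ : IsTriangleWave φ) (x : ℝ) : φ x ∈ Icc (0 : ℝ) 1 := by
  obtain ⟨k, hk⟩ := exists_sub_two_mul_intCast_mem_Icc x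
  rw [hφ.eq_abs_sub hk]
  exact ⟨abs_nonneg _, abs_le.mpr hk⟩

theorem even (hφ : IsTriangleWave φ) : Function.Even φ := by
  intro x
  obtain ⟨k, hk⟩ := exists_sub_two_mul_intCast_mem_Icc x
  have hk' : -x - 2 * ((-k : ℤ) : ℝ) ∈ Icc (-1 : ℝ) 1 := by
    push_cast; constructor <;> linarith [hk.1, hk.2]
  rw [hφ.eq_abs_sub hk, hφ.eq_abs_sub hk', ← abs_neg]
  push_cast; ring_nf

theorem exists_eq_of_apply_eq (hφ : IsTriangleWave φ) {x c : ℝ} (h : φ x = c) :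
    ∃ k : ℤ, x = c + 2 * k ∨ x = -c + 2 * k := by
  obtain ⟨k, hk⟩ := exists_sub_two_mul_intCast_mem_Icc x
  rw [hφ.eq_abs_sub hk] at h
  refine ⟨k, ?_⟩
  rcases (abs_eq (h ▸ abs_nonneg _)).mp h with h | h
  · left; linarith
  · right; linarith

theorem apply_intCast_add_eq_or (hφ : IsTriangleWave φ) (m : ℤ) (u : ℝ) :
    φ (m + u) = φ u ∨ φ (m + u) = φ (u + 1) := by
  rcases Int.even_or_odd' m with ⟨k, rfl | rfl⟩
  · left
    rw [← hφ.periodic.int_mul k u]; congr 1; push_cast; ring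
  · right
    rw [← hφ.periodic.int_mul k (u + 1)]; congr 1; push_cast; ring

theorem apply_intCast_sub_eq_or (hφ : IsTriangleWave φ) (m : ℤ) (u : ℝ) :
    φ (m - u) = φ u ∨ φ (m - u) = φ (u + 1) := by
  rw [← hφ.even (m - u), neg_sub, sub_eq_neg_add, ← Int.cast_neg]
  exact hφ.apply_intCast_add_eq_or (-m) u

theorem apply_midpoint_mem (hφ : IsTriangleWave φ) {x y o a : ℝ}
    (hx : φ x = o) (hy : φ y = a) : φ (midpoint ℝ x y) ∈ midpointValues φ o a := by
  have mem {u v : ℝ} (hu : u = (o + a) / 2 ∨ u = (o - a) / 2) (hv : v = φ u ∨ v = φ (u + 1)) :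
      v ∈ midpointValues φ o a := by
    rcases hu with rfl | rfl <;> rcases hv with rfl | rfl <;> simp [midpointValues]
  rw [midpoint_eq_smul_add, invOf_eq_inv, smul_eq_mul]
  obtain ⟨k, rfl | rfl⟩ := hφ.exists_eq_of_apply_eq hx <;>
  obtain ⟨l, rfl | rfl⟩ := hφ.exists_eq_of_apply_eq hy
  · have e : 2⁻¹ * (o + 2 * k + (a + 2 * l)) = ((k + l : ℤ) : ℝ) + (o + a) / 2 := by
      push_cast; ring
    exact mem (Or.inl rfl) (e ▸ hφ.apply_intCast_add_eq_or _ _)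
  · have e : 2⁻¹ * (o + 2 * k + (-a + 2 * l)) = ((k + l : ℤ) : ℝ) + (o - a) / 2 := by
      push_cast; ring
    exact mem (Or.inr rfl) (e ▸ hφ.apply_intCast_add_eq_or _ _)
  · have e : 2⁻¹ * (-o + 2 * k + (a + 2 * l)) = ((k + l : ℤ) : ℝ) - (o - a) / 2 := by
      push_cast; ring
    exact mem (Or.inr rfl) (e ▸ hφ.apply_intCast_sub_eq_or _ _)
  · have e : 2⁻¹ * (-o + 2 * k + (-a + 2 * l)) = ((k + l : ℤ) : ℝ) - (o + a) / 2 := by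
      push_cast; ring
    exact mem (Or.inl rfl) (e ▸ hφ.apply_intCast_sub_eq_or _ _)

theorem exists_pos_pairwise_le_dist (hφ : IsTriangleWave φ) (c : ℝ) :
    ∃ δ > 0, (φ ⁻¹' {c}).Pairwise (δ ≤ dist · ·) := by
  obtain ⟨ε, hε, hcε⟩ := exists_pos_forall_le_abs_sub_intCast c
  refine ⟨2 * min 1 ε, by positivity, ?_⟩
  have of_int {z : ℤ} (hz : z ≠ 0) : 2 * min 1 ε ≤ |2 * (z : ℝ)| := by
    rw [abs_mul, abs_two]
    have : (1 : ℝ) ≤ |(z : ℝ)| := by exact_mod_cast Int.one_le_abs hz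
    nlinarith [min_le_left 1 ε]
  have of_shift {z : ℤ} (hz : c ≠ z) : 2 * min 1 ε ≤ |2 * (c - z)| := by
    rw [abs_mul, abs_two]
    nlinarith [min_le_right 1 ε, hcε z hz]
  intro x hx y hy hxy
  rw [Real.dist_eq]
  obtain ⟨k, rfl | rfl⟩ := hφ.exists_eq_of_apply_eq hx <;>
  obtain ⟨l, rfl | rfl⟩ := hφ.exists_eq_of_apply_eq hy
  · have hkl : k - l ≠ 0 := fun h => hxy (by rw [sub_eq_zero.mp h])
    convert of_int hkl using 2; push_cast; ring
  · have hc : c ≠ ((l - k : ℤ) : ℝ) := fun h => hxy (by push_cast at h; linarith)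
    convert of_shift hc using 2; push_cast; ring
  · have hc : c ≠ ((k - l : ℤ) : ℝ) := fun h => hxy (by push_cast at h; linarith)
    rw [← abs_neg]
    convert of_shift hc using 2; push_cast; ring
  · have hkl : k - l ≠ 0 := fun h => hxy (by rw [sub_eq_zero.mp h])
    convert of_int hkl using 2; push_cast; ring

theorem midpointValues_subset_Icc (hφ : IsTriangleWave φ) (o a : ℝ) :
    ↑(midpointValues φ o a) ⊆ Icc (0 : ℝ) 1 := by
  intro v hv
  simp only [midpointValues, Finset.coe_insert, Finset.coe_singleton, mem_insert_iff,
    mem_singleton_iff] at hv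
  rcases hv with rfl | rfl | rfl | rfl <;> exact hφ.mem_Icc _

theorem prodMap_midpoint_mem (hφ : IsTriangleWave φ)
    {X Y O A : ℝ × ℝ} (hX : Prod.map φ φ X = O) (hY : Prod.map φ φ Y = A) :
    Prod.map φ φ (midpoint ℝ X Y) ∈ midpointValues φ O.1 A.1 ×ˢ midpointValues φ O.2 A.2 := by
  subst hX hY
  refine Finset.mem_product.mpr ⟨?_, ?_⟩
  · simp only [Prod.map_fst, Prod.fst_midpoint]
    exact hφ.apply_midpoint_mem rfl rfl
  · simp only [Prod.map_snd, Prod.snd_midpoint]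
    exact hφ.apply_midpoint_mem rfl rfl

end IsTriangleWave

theorem square_billiard_finite_blocking_general
    (φ : ℝ → ℝ)
    (hper : ∀ x : ℝ, φ (x + 2) = φ x)
    (habs : ∀ x ∈ Set.Icc (-1 : ℝ) 1, φ x = |x|)
    (Φ : ℝ × ℝ → ℝ × ℝ)
    (hΦ : ∀ p : ℝ × ℝ, Φ p = (φ p.1, φ p.2))
    (O A : ℝ × ℝ) :
    ∃ B : Finset (ℝ × ℝ),
      ↑B ⊆ Set.Icc (0 : ℝ) 1 ×ˢ Set.Icc (0 : ℝ) 1 ∧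
      O ∉ B ∧ A ∉ B ∧
      ∀ O' A' : ℝ × ℝ, Φ O' = O → Φ A' = A → O' ≠ A' →
        ∃ t ∈ Set.Ioo (0 : ℝ) 1, Φ (O' + t • (A' - O')) ∈ B := by
  obtain rfl : Φ = Prod.map φ φ := funext hΦ
  have hφ : IsTriangleWave φ := ⟨hper, habs⟩
  set P := midpointValues φ O.1 A.1 ×ˢ midpointValues φ O.2 A.2
  obtain ⟨δO, hδO, hsepO⟩ := exists_pos_pairwise_le_dist_prodMap
    (hφ.exists_pos_pairwise_le_dist O.1) (hφ.exists_pos_pairwise_le_dist O.2)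
  obtain ⟨δA, hδA, hsepA⟩ := exists_pos_pairwise_le_dist_prodMap
    (hφ.exists_pos_pairwise_le_dist A.1) (hφ.exists_pos_pairwise_le_dist A.2)
  refine ⟨P \ {O, A}, ?_, by simp, by simp, fun O' A' hO' hA' hne => ?_⟩
  · rw [Finset.coe_sdiff, Finset.coe_product]
    exact sdiff_subset.trans
      (prod_mono (hφ.midpointValues_subset_Icc _ _) (hφ.midpointValues_subset_Icc _ _))
  · refine exists_map_add_smul_mem_of_map_midpoint_mem_insert
      (hsepO.mono' fun _ _ => (min_le_left _ _).trans)
      (hsepA.mono' fun _ _ => (min_le_right _ _).trans)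
      (fun X Y hX hY => ?_) (lt_min hδO hδA) hO' hA' hne
    have := hφ.prodMap_midpoint_mem hX hY
    simp only [Finset.coe_sdiff, Finset.coe_insert, Finset.coe_singleton, mem_insert_iff,
      mem_sdiff, Finset.mem_coe, mem_singleton_iff]
    tauto

/-- The unit square billiard has the finite blocking property.  Here `φ : ℝ → ℝ` is
the (unique) 2-periodic function with `φ x = |x|` on `[-1, 1]`, and
`Φ (x, y) = (φ x, φ y)` is the folding map `ℝ² → [0,1]²`; billiard trajectories in
the unit square from `O` to `A` are exactly the paths `t ↦ Φ (O' + t • (A' − O'))`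
with `Φ O' = O`, `Φ A' = A`, `O' ≠ A'`.  For every pair `O, A ∈ [0,1]²` there is a
finite set `B ⊆ [0,1]²` with `O ∉ B`, `A ∉ B` meeting the interior of every such
trajectory. -/
theorem square_billiard_finite_blocking
    (φ : ℝ → ℝ)
    (hper : ∀ x : ℝ, φ (x + 2) = φ x)
    (habs : ∀ x ∈ Set.Icc (-1 : ℝ) 1, φ x = |x|)
    (Φ : ℝ × ℝ → ℝ × ℝ)
    (hΦ : ∀ p : ℝ × ℝ, Φ p = (φ p.1, φ p.2))
    (O A : ℝ × ℝ)
    (hO : O ∈ Set.Icc (0 : ℝ) 1 ×ˢ Set.Icc (0 : ℝ) 1)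
    (hA : A ∈ Set.Icc (0 : ℝ) 1 ×ˢ Set.Icc (0 : ℝ) 1) :
    ∃ B : Finset (ℝ × ℝ),
      ↑B ⊆ Set.Icc (0 : ℝ) 1 ×ˢ Set.Icc (0 : ℝ) 1 ∧
      O ∉ B ∧ A ∉ B ∧
      ∀ O' A' : ℝ × ℝ, Φ O' = O → Φ A' = A → O' ≠ A' →
        ∃ t ∈ Set.Ioo (0 : ℝ) 1, Φ (O' + t • (A' - O')) ∈ B :=
  square_billiard_finite_blocking_general φ hper habs Φ hΦ O A
end

section
/- Let w₁, w₂ be positive real numbers with w₁/w₂ irrational. Let q : ℕ → ℤ be strictly increasing, let p : ℕ → ℤ be such that the sequence n ↦ p(n)·w₂ − q(n)·w₁ is bounded, let k : ℕ → ℤ be arbitrary, and let c be a nonzero real number. Then the sequence n ↦ c·(q(n)·w₁ + p(n)·w₂) − k(n)·w₁ is not constant. -/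
/-!
Subtracting the value at `0`, constancy says that every difference vector
`(aₙ, bₙ) = (q n - q 0, p n - p 0)` satisfies `c (aₙ w₁ + bₙ w₂) ∈ ℤ w₁`. Since `w₁` and `w₂` are
linearly independent over `ℚ`, any two such vectors are parallel, so
`a₁ (bₙ w₂ - aₙ w₁) = aₙ (b₁ w₂ - a₁ w₁)`. The left side is bounded, while `aₙ → ∞` and
`b₁ w₂ - a₁ w₁ ≠ 0` because `a₁ > 0`.
-/

open Filter

theorem Irrational.eq_zero_of_int_mul_add_int_mul_eq_zero {x y : ℝ} (h : Irrational (x / y))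
    {a b : ℤ} (hab : a * x + b * y = 0) : a = 0 ∧ b = 0 := by
  have hy : y ≠ 0 := by
    rintro rfl
    exact h.ne_zero (div_zero x)
  have ha : a = 0 := by
    by_contra ha
    refine h.ne_rat (-b / a) ?_
    push_cast
    field_simp
    linarith
  subst ha
  simpa [hy] using hab

theorem Irrational.mul_eq_mul_of_mul_lincomb_eq_int_mul {x y c : ℝ} (h : Irrational (x / y))
    (hc : c ≠ 0) {a b k a' b' k' : ℤ} (h₁ : c * (a * x + b * y) = k * x)
    (h₂ : c * (a' * x + b' * y) = k' * x) : a * b' = a' * b := by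
  obtain ⟨hka, hkb⟩ : k' * a - k * a' = 0 ∧ k' * b - k * b' = 0 := by
    refine h.eq_zero_of_int_mul_add_int_mul_eq_zero (mul_left_cancel₀ hc ?_)
    push_cast
    linear_combination (k' : ℝ) * h₁ - (k : ℝ) * h₂
  by_cases hk : k = 0
  · subst hk
    have hab : (a : ℝ) * x + b * y = 0 := by simpa [hc] using h₁
    obtain ⟨rfl, rfl⟩ := h.eq_zero_of_int_mul_add_int_mul_eq_zero hab
    ring
  · refine mul_left_cancel₀ hk ?_
    linear_combination b * hka - a * hkb

theorem StrictMono.not_exists_abs_intCast_mul_le {u : ℕ → ℤ} (hu : StrictMono u) {B : ℝ}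
    (hB : B ≠ 0) : ¬ ∃ l : ℝ, ∀ n, |(u n : ℝ) * B| ≤ l := by
  rintro ⟨l, hl⟩
  have hu_top : Tendsto u atTop atTop :=
    tendsto_atTop_atTop_of_monotone' hu.monotone hu.not_bddAbove_range_of_isSuccArchimedean
  have hlim : Tendsto (fun n ↦ (u n : ℝ) * |B|) atTop atTop :=
    (tendsto_intCast_atTop_atTop.comp hu_top).atTop_mul_const (abs_pos.mpr hB)
  obtain ⟨n, hn⟩ := (hlim.eventually_gt_atTop l).exists
  have : (u n : ℝ) * |B| ≤ |(u n : ℝ) * B| := by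
    rw [abs_mul]
    exact mul_le_mul_of_nonneg_right (le_abs_self _) (abs_nonneg B)
  linarith [hl n]

theorem two_cylinder_arithmetic_core_general (w₁ w₂ : ℝ)
    (hirr : Irrational (w₁ / w₂))
    (q p k : ℕ → ℤ) (hq : StrictMono q)
    (hbdd : ∃ l : ℝ, ∀ n : ℕ, |(p n : ℝ) * w₂ - (q n : ℝ) * w₁| ≤ l)
    (c : ℝ) (hc : c ≠ 0) :
    ¬ ∀ m n : ℕ,
        c * ((q m : ℝ) * w₁ + (p m : ℝ) * w₂) - (k m : ℝ) * w₁ =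
        c * ((q n : ℝ) * w₁ + (p n : ℝ) * w₂) - (k n : ℝ) * w₁ := by
  intro hconst
  obtain ⟨l, hl⟩ := hbdd
  set a : ℕ → ℤ := fun n ↦ q n - q 0
  set b : ℕ → ℤ := fun n ↦ p n - p 0
  have hdiff (n : ℕ) : c * ((a n : ℝ) * w₁ + b n * w₂) = ((k n - k 0 : ℤ) : ℝ) * w₁ := by
    simp only [a, b, Int.cast_sub]
    linear_combination hconst n 0
  have hparallel (n : ℕ) : a 1 * b n = a n * b 1 :=
    hirr.mul_eq_mul_of_mul_lincomb_eq_int_mul hc (hdiff 1) (hdiff n)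
  have ha : StrictMono a := fun m n hmn ↦ by simpa [a] using hq hmn
  have ha₁ : a 1 ≠ 0 := (sub_pos.mpr (hq Nat.zero_lt_one)).ne'
  have hB : (b 1 : ℝ) * w₂ - a 1 * w₁ ≠ 0 := fun h ↦ by
    have := hirr.eq_zero_of_int_mul_add_int_mul_eq_zero (a := -a 1) (b := b 1)
      (by push_cast; linarith)
    omega
  refine ha.not_exists_abs_intCast_mul_le hB ⟨|(a 1 : ℝ)| * (l + l), fun n ↦ ?_⟩
  have hrel : (a n : ℝ) * ((b 1 : ℝ) * w₂ - a 1 * w₁)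
      = a 1 * (((p n : ℝ) * w₂ - q n * w₁) - ((p 0 : ℝ) * w₂ - q 0 * w₁)) := by
    have := congrArg (Int.cast : ℤ → ℝ) (hparallel n)
    simp only [a, b, Int.cast_mul, Int.cast_sub] at this ⊢
    linear_combination (-w₂) * this
  rw [hrel, abs_mul]
  exact mul_le_mul_of_nonneg_left ((abs_sub _ _).trans (add_le_add (hl n) (hl 0))) (abs_nonneg _)

/-- Arithmetic core of the two-cylinder lemma.  Let `w₁, w₂ > 0` with `w₁/w₂`
irrational, let `q : ℕ → ℤ` be strictly increasing, let `p : ℕ → ℤ` be such that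
`n ↦ p n · w₂ − q n · w₁` is bounded, let `k : ℕ → ℤ` be arbitrary and `c ≠ 0`.
Then `n ↦ c·(q n · w₁ + p n · w₂) − k n · w₁` is not constant. -/
theorem two_cylinder_arithmetic_core (w₁ w₂ : ℝ) (hw₁ : 0 < w₁) (hw₂ : 0 < w₂)
    (hirr : Irrational (w₁ / w₂))
    (q p k : ℕ → ℤ) (hq : StrictMono q)
    (hbdd : ∃ l : ℝ, ∀ n : ℕ, |(p n : ℝ) * w₂ - (q n : ℝ) * w₁| ≤ l)
    (c : ℝ) (hc : c ≠ 0) :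
    ¬ ∀ m n : ℕ,
        c * ((q m : ℝ) * w₁ + (p m : ℝ) * w₂) - (k m : ℝ) * w₁ =
        c * ((q n : ℝ) * w₁ + (p n : ℝ) * w₂) - (k n : ℝ) * w₁ :=
  two_cylinder_arithmetic_core_general w₁ w₂ hirr q p k hq hbdd c hc
end

section
/- Let w₁, w₂ be positive real numbers with w₁/w₂ irrational. Let q : ℕ → ℤ be strictly increasing, let p : ℕ → ℤ be such that p(n)/q(n) converges to an irrational real number λ, let k : ℕ → ℤ be arbitrary, and let c be a nonzero real number. Then the sequence n ↦ c·(q(n)·w₁ + p(n)·w₂) − k(n)·w₁ is not constant. -/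
/-!
Put `α = w₁ / w₂` and difference everything against the index `0`: constancy says
`c · (Aₙ α + Pₙ) = Kₙ α` with `Aₙ = q n - q 0`, `Pₙ = p n - p 0`, `Kₙ = k n - k 0`.
Since `1` and `α` are linearly independent over `ℚ`, eliminating `c` between two such
relations forces `Pₙ A₁ = Aₙ P₁`, so `p n A₁ = q n P₁ + const`. As `q n → ∞` this gives
`p n / q n → P₁ / A₁`, a rational limit, contradicting the irrationality of `lam`.
-/

open Filter Topology

theorem Irrational.intCast_mul_add_intCast_eq_zero {α : ℝ} (hα : Irrational α) {a b : ℤ}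
    (h : a * α + b = 0) : a = 0 ∧ b = 0 := by
  have ha : a = 0 := by
    by_contra ha
    exact ((hα.intCast_mul ha).add_intCast b).ne_zero h
  subst ha
  exact ⟨rfl, by simpa using h⟩

theorem Irrational.mul_eq_mul_of_mul_eq_intCast_mul {α c : ℝ} (hα : Irrational α) (hc : c ≠ 0)
    {a b k a' b' k' : ℤ} (h : c * (a * α + b) = k * α) (h' : c * (a' * α + b') = k' * α) :
    b * a' = a * b' := by
  obtain ⟨hka, hkb⟩ : k' * a - k * a' = 0 ∧ k' * b - k * b' = 0 := by
    refine hα.intCast_mul_add_intCast_eq_zero ((mul_eq_zero.mp ?_).resolve_left hc)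
    push_cast
    linear_combination (k' : ℝ) * h - (k : ℝ) * h'
  by_cases hk : k = 0
  · subst hk
    have hab : (a : ℝ) * α + b = 0 := by simpa [hc] using h
    obtain ⟨rfl, rfl⟩ := hα.intCast_mul_add_intCast_eq_zero hab
    simp
  · have : k * (b * a' - a * b') = 0 := by linear_combination (-b) * hka + a * hkb
    exact sub_eq_zero.mp ((mul_eq_zero.mp this).resolve_left hk)

theorem StrictMono.tendsto_atTop_of_int {q : ℕ → ℤ} (hq : StrictMono q) :
    Tendsto q atTop atTop := by
  have hgrowth : ∀ n : ℕ, q 0 + n ≤ q n := by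
    intro n
    induction n with
    | zero => simp
    | succ n ih =>
      have := hq (Nat.lt_add_one n)
      push_cast
      omega
  exact tendsto_atTop_mono hgrowth (tendsto_atTop_add_const_left _ _ tendsto_natCast_atTop_atTop)

theorem tendsto_div_of_mul_eq_mul_add {ι : Type*} {l : Filter ι} {x y : ι → ℝ} {a b d : ℝ}
    (ha : a ≠ 0) (hy : Tendsto y l atTop) (h : ∀ i, x i * a = y i * b + d) :
    Tendsto (fun i => x i / y i) l (𝓝 (b / a)) := by
  have hlim : Tendsto (fun i => b / a + d / a / y i) l (𝓝 (b / a)) := by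
    simpa using tendsto_const_nhds.add (tendsto_const_nhds.div_atTop hy)
  refine hlim.congr' ?_
  filter_upwards [hy.eventually_ne_atTop 0] with i hi
  field_simp
  linear_combination -h i

theorem two_cylinder_arithmetic_core_refined_general (w₁ w₂ : ℝ)
    (hirr : Irrational (w₁ / w₂))
    (q p k : ℕ → ℤ) (hq : StrictMono q)
    (lam : ℝ) (hlam : Irrational lam)
    (hconv : Filter.Tendsto (fun n : ℕ => (p n : ℝ) / (q n : ℝ)) Filter.atTop (nhds lam))
    (c : ℝ) (hc : c ≠ 0) :
    ¬ ∀ m n : ℕ,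
        c * ((q m : ℝ) * w₁ + (p m : ℝ) * w₂) - (k m : ℝ) * w₁ =
        c * ((q n : ℝ) * w₁ + (p n : ℝ) * w₂) - (k n : ℝ) * w₁ := by
  intro hconst
  have hw₂ : w₂ ≠ 0 := (div_ne_zero_iff.mp hirr.ne_zero).2
  have hrel : ∀ n, c * (((q n - q 0 : ℤ) : ℝ) * (w₁ / w₂) + ((p n - p 0 : ℤ) : ℝ)) =
      ((k n - k 0 : ℤ) : ℝ) * (w₁ / w₂) := by
    intro n
    field_simp
    push_cast
    linear_combination hconst n 0
  have hA₁ : q 1 - q 0 ≠ 0 := sub_ne_zero.mpr (hq zero_lt_one).ne'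
  have hlin : ∀ n, (p n : ℝ) * ((q 1 - q 0 : ℤ) : ℝ) =
      q n * ((p 1 - p 0 : ℤ) : ℝ) + ((p 0 * (q 1 - q 0) - q 0 * (p 1 - p 0) : ℤ) : ℝ) := by
    intro n
    have := congrArg (Int.cast : ℤ → ℝ)
      (hirr.mul_eq_mul_of_mul_eq_intCast_mul hc (hrel n) (hrel 1))
    push_cast at this ⊢
    linear_combination this
  have hlim := tendsto_div_of_mul_eq_mul_add (by exact_mod_cast hA₁)
    (tendsto_intCast_atTop_atTop.comp hq.tendsto_atTop_of_int) hlin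
  exact hlam.ne_rational _ _ (tendsto_nhds_unique hconv hlim)

/-- Arithmetic core of the refinement of the two-cylinder lemma.  Let `w₁, w₂ > 0`
with `w₁/w₂` irrational, let `q : ℕ → ℤ` be strictly increasing, let `p : ℕ → ℤ` be
such that `p n / q n` converges to an irrational real number `lam`, let `k : ℕ → ℤ`
be arbitrary and `c ≠ 0`.  Then `n ↦ c·(q n · w₁ + p n · w₂) − k n · w₁` is not
constant. -/
theorem two_cylinder_arithmetic_core_refined (w₁ w₂ : ℝ) (hw₁ : 0 < w₁) (hw₂ : 0 < w₂)
    (hirr : Irrational (w₁ / w₂))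
    (q p k : ℕ → ℤ) (hq : StrictMono q)
    (lam : ℝ) (hlam : Irrational lam)
    (hconv : Filter.Tendsto (fun n : ℕ => (p n : ℝ) / (q n : ℝ)) Filter.atTop (nhds lam))
    (c : ℝ) (hc : c ≠ 0) :
    ¬ ∀ m n : ℕ,
        c * ((q m : ℝ) * w₁ + (p m : ℝ) * w₂) - (k m : ℝ) * w₁ =
        c * ((q n : ℝ) * w₁ + (p n : ℝ) * w₂) - (k n : ℝ) * w₁ :=
  two_cylinder_arithmetic_core_refined_general w₁ w₂ hirr q p k hq lam hlam hconv c hc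
end
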